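/- arXiv:1807.00544 — 6 statements merged into one kernel-verified Lean document; each statement's English description precedes it below -/
import Mathlib

section
/- Let G be an m-uniform hypergraph and x ∈ C^n a vector with all entries nonzero of the form x_i = e^{2πi·α_i/m} with α_i integers. Then L(G)x^{m-1} = 0 if and only if for every edge e of G, the sum ∑_{j∈e} α_j ≡ 0 (mod m). -/
/-!
Every `x i` is an `m`-th root of unity, so multiplying the equation at vertex `i` by `x i` turns it
into `deg i = ∑_{e ∋ i} ∏_{j ∈ e} x j`: a sum of `deg i` complex numbers of modulus one equal to
`deg i`. This forces every summand to be `1`, and `∏_{j ∈ e} x j = exp (2πi ∑_{j ∈ e} α j / m)` is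
`1` exactly when `m ∣ ∑_{j ∈ e} α j`.
-/

open Complex Finset
open scoped Real

theorem Complex.eq_one_of_sum_eq_card {ι : Type*} {s : Finset ι} {f : ι → ℂ}
    (hf : ∀ a ∈ s, ‖f a‖ ≤ 1) (h : ∑ a ∈ s, f a = s.card) : ∀ a ∈ s, f a = 1 := by
  have hre_le : ∀ a ∈ s, (f a).re ≤ 1 := fun a ha =>
    (re_le_norm (f a)).trans (hf a ha)
  have hre_sum : ∑ a ∈ s, (f a).re = ∑ _a ∈ s, (1 : ℝ) := by
    simpa using congrArg re h
  intro a ha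
  have hre : (f a).re = 1 := (sum_eq_sum_iff_of_le hre_le).mp hre_sum a ha
  have him : (f a).im = 0 := abs_re_eq_norm.mp <| le_antisymm (abs_re_le_norm _) <| by
    rw [hre, abs_one]; exact hf a ha
  exact Complex.ext hre him

theorem Complex.exp_two_pi_I_mul_int_div_eq_one_iff {m : ℕ} (hm : m ≠ 0) (k : ℤ) :
    exp (2 * π * I * k / m) = 1 ↔ (m : ℤ) ∣ k := by
  rw [show 2 * π * I * k / m = k * (2 * π * I / m) by ring, exp_int_mul,
    (isPrimitiveRoot_exp m hm).zpow_eq_one_iff_dvd]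

section Hypergraph

variable {V : Type*} [DecidableEq V] {m : ℕ} (E : Finset (Finset V))

theorem laplacian_vertex_eq_iff_card_eq_sum_prod {K : Type*} [Field K] (x : V → K) (hm : 0 < m)
    {i : V} (hi : x i ^ m = 1) :
    ((E.filter (fun e => i ∈ e)).card : K) * x i ^ (m - 1) =
        ∑ e ∈ E.filter (fun e => i ∈ e), ∏ j ∈ e.erase i, x j ↔
      ((E.filter (fun e => i ∈ e)).card : K) = ∑ e ∈ E.filter (fun e => i ∈ e), ∏ j ∈ e, x j := by
  have hxi : x i ≠ 0 := fun h0 => by simp [h0, hm.ne'] at hi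
  rw [← mul_left_inj' hxi, mul_assoc, ← pow_succ, Nat.sub_add_cancel hm, hi, mul_one, sum_mul]
  refine Eq.congr_right (sum_congr rfl fun e he => ?_)
  rw [mul_comm, mul_prod_erase e x (mem_filter.mp he).2]

theorem laplacian_eq_zero_iff_forall_prod_eq_one (hm : 0 < m) (hE : ∀ e ∈ E, e.Nonempty)
    (x : V → ℂ) (hx : ∀ i, x i ^ m = 1) :
    (∀ i, ((E.filter (fun e => i ∈ e)).card : ℂ) * x i ^ (m - 1) =
        ∑ e ∈ E.filter (fun e => i ∈ e), ∏ j ∈ e.erase i, x j) ↔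
      ∀ e ∈ E, ∏ j ∈ e, x j = 1 := by
  simp only [laplacian_vertex_eq_iff_card_eq_sum_prod E x hm (hx _)]
  constructor
  · intro h e he
    obtain ⟨i, hi⟩ := hE e he
    refine Complex.eq_one_of_sum_eq_card (fun e _ => ?_) (h i).symm e (mem_filter.mpr ⟨he, hi⟩)
    rw [norm_prod, prod_eq_one fun j _ => norm_eq_one_of_pow_eq_one (hx j) hm.ne']
  · intro h i
    rw [sum_congr rfl fun e he => h e (mem_filter.mp he).1]
    simp

end Hypergraph

/-- For an m-uniform hypergraph `G` and a vector `x` with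
`x i = exp(2πi·α_i/m)` (`α_i` integers), the Laplacian eigen-equation
`L(G)x^{m-1} = 0`, which at vertex `i` reads
`deg(i)·x_i^{m-1} = ∑_{e ∋ i} ∏_{j ∈ e, j ≠ i} x_j`, holds iff for every edge `e`,
`∑_{j ∈ e} α_j ≡ 0 (mod m)`. -/
theorem first_laplacian_eigenvector_characterization
    (m n : ℕ) (hm : 0 < m) (E : Finset (Finset (Fin n))) (hU : ∀ e ∈ E, e.card = m)
    (α : Fin n → ℤ) (x : Fin n → ℂ)
    (hx : ∀ i, x i = Complex.exp (2 * Real.pi * Complex.I * (α i) / m)) :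
    (∀ i : Fin n, ((E.filter (fun e => i ∈ e)).card : ℂ) * x i ^ (m - 1) =
        ∑ e ∈ E.filter (fun e => i ∈ e), ∏ j ∈ e.erase i, x j) ↔
      ∀ e ∈ E, (m : ℤ) ∣ ∑ j ∈ e, α j := by
  have hprod : ∀ s : Finset (Fin n),
      ∏ j ∈ s, x j = exp (2 * π * I * ↑(∑ j ∈ s, α j) / m) := fun s => by
    simp only [hx, ← exp_sum, Int.cast_sum, mul_sum, sum_div]
  have hroot : ∀ i, x i ^ m = 1 := fun i => by
    rw [hx, ← exp_nat_mul, show (m : ℂ) * (2 * π * I * α i / m) = 2 * π * I * ↑(m * α i) / m by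
      push_cast; ring, exp_two_pi_I_mul_int_div_eq_one_iff hm.ne']
    exact dvd_mul_right _ _
  have hE : ∀ e ∈ E, e.Nonempty := fun e he => card_pos.mp (hU e he ▸ hm)
  rw [laplacian_eq_zero_iff_forall_prod_eq_one E hm hE x hroot]
  simp only [hprod, exp_two_pi_I_mul_int_div_eq_one_iff hm.ne']
end

section
/- Let G be an m-uniform hypergraph and x ∈ C^n a vector with all entries of the form x_i = e^{2πi·α_i/m} with α_i integers. Then Q(G)x^{m-1} = 0 if and only if for every edge e of G, the sum ∑_{j∈e} α_j ≡ m/2 (mod m); in particular this is only possible when m is even. -/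
/-!
Multiplying the equation at vertex `i` by the `m`-th root of unity `x i` turns it into
`∑_{e ∋ i} (1 + ∏_{j ∈ e} x j) = 0`. Each `∏_{j ∈ e} x j` lies on the unit circle, so every
summand has nonnegative real part, and the sum vanishes iff `∏_{j ∈ e} x j = -1` for every edge
through `i`. Since edges are nonempty, this means `exp (2πi ∑_{j ∈ e} α j / m) = -1` for all
edges, which is the congruence; it forces `m` to be even.
-/

open Complex Finset Real

namespace Complex

lemma re_one_add_nonneg_of_norm_eq_one {w : ℂ} (hw : ‖w‖ = 1) : 0 ≤ (1 + w).re := by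
  have := neg_le_of_abs_le (hw ▸ abs_re_le_norm w)
  simp only [add_re, one_re]
  linarith

lemma eq_neg_one_of_norm_eq_one_of_re_one_add_eq_zero {w : ℂ} (hw : ‖w‖ = 1)
    (hre : (1 + w).re = 0) : w = -1 := by
  have hre' : w.re = -1 := by simp only [add_re, one_re] at hre; linarith
  have him : w.im = 0 := abs_re_eq_norm.mp (by rw [hre', hw]; norm_num)
  exact Complex.ext (by simpa using hre') (by simpa using him)

lemma sum_one_add_eq_zero_iff {ι : Type*} {s : Finset ι} {w : ι → ℂ}
    (hw : ∀ i ∈ s, ‖w i‖ = 1) : ∑ i ∈ s, (1 + w i) = 0 ↔ ∀ i ∈ s, w i = -1 := by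
  refine ⟨fun h i hi => ?_, fun h => sum_eq_zero fun i hi => by rw [h i hi, add_neg_cancel]⟩
  have hre : ∑ i ∈ s, (1 + w i).re = 0 := by rw [← re_sum, h, zero_re]
  have hzero := (sum_eq_zero_iff_of_nonneg fun j hj =>
    re_one_add_nonneg_of_norm_eq_one (hw j hj)).mp hre
  exact eq_neg_one_of_norm_eq_one_of_re_one_add_eq_zero (hw i hi) (hzero i hi)

lemma exp_two_pi_mul_I_mul_int_div_pow {m : ℕ} (hm : m ≠ 0) (a : ℤ) :
    exp (2 * π * I * a / m) ^ m = 1 := by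
  rw [← exp_nat_mul, ← exp_int_mul_two_pi_mul_I a]
  congr 1
  field_simp

lemma prod_exp_two_pi_mul_I_div {ι : Type*} (s : Finset ι) (a : ι → ℤ) (m : ℕ) :
    ∏ i ∈ s, exp (2 * π * I * a i / m) = exp (2 * π * I * ((∑ i ∈ s, a i : ℤ) : ℂ) / m) := by
  rw [← exp_sum]
  push_cast
  rw [mul_sum, sum_div]

lemma exp_two_pi_mul_I_mul_int_div_eq_neg_one_iff {m : ℕ} (hm : m ≠ 0) (a : ℤ) :
    exp (2 * π * I * a / m) = -1 ↔ 2 * a ≡ m [ZMOD 2 * m] := by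
  rw [← exp_pi_mul_I, exp_eq_exp_iff_exists_int, Int.modEq_comm, Int.modEq_iff_add_fac]
  have hm' : (m : ℂ) ≠ 0 := Nat.cast_ne_zero.mpr hm
  have hpiI : (π : ℂ) * I ≠ 0 := mul_ne_zero (ofReal_ne_zero.mpr Real.pi_ne_zero) I_ne_zero
  refine exists_congr fun k => ?_
  rw [← Int.cast_inj (α := ℂ), div_eq_iff hm']
  push_cast
  constructor
  · intro h
    exact mul_left_cancel₀ hpiI (by linear_combination h)
  · intro h
    linear_combination (π * I) * h

end Complex

lemma Int.even_of_two_mul_modEq {a m : ℤ} (h : 2 * a ≡ m [ZMOD 2 * m]) : Even m := by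
  have h2 : 2 * a ≡ m [ZMOD 2] := h.of_mul_right m
  unfold Int.ModEq at h2
  rw [Int.even_iff]
  omega

lemma add_sum_prod_erase_eq_zero_iff {K ι : Type*} [Field K] [DecidableEq ι] {m : ℕ} (hm : 0 < m)
    {x : ι → K} {i : ι} (hxi : x i ^ m = 1) {S : Finset (Finset ι)} (hS : ∀ e ∈ S, i ∈ e) :
    (#S : K) * x i ^ (m - 1) + ∑ e ∈ S, ∏ j ∈ e.erase i, x j = 0 ↔
      ∑ e ∈ S, (1 + ∏ j ∈ e, x j) = 0 := by
  have hxi0 : x i ≠ 0 := by rintro h; simp [h, hm.ne'] at hxi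
  have key : ((#S : K) * x i ^ (m - 1) + ∑ e ∈ S, ∏ j ∈ e.erase i, x j) * x i =
      ∑ e ∈ S, (1 + ∏ j ∈ e, x j) := by
    rw [add_mul, mul_assoc, ← pow_succ, Nat.sub_add_cancel hm, hxi, sum_mul, sum_add_distrib,
      sum_const, nsmul_one, mul_one]
    exact congrArg _ (sum_congr rfl fun e he => prod_erase_mul e x (hS e he))
  rw [← key, mul_eq_zero, or_iff_left hxi0]

lemma forall_sum_filter_mem_one_add_eq_zero_iff {ι : Type*} [DecidableEq ι] {E : Finset (Finset ι)}
    (hE : ∀ e ∈ E, e.Nonempty) {w : Finset ι → ℂ} (hw : ∀ e ∈ E, ‖w e‖ = 1) :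
    (∀ i, ∑ e ∈ E.filter (fun e => i ∈ e), (1 + w e) = 0) ↔ ∀ e ∈ E, w e = -1 := by
  simp_rw [sum_one_add_eq_zero_iff fun e he => hw e (mem_filter.1 he).1, mem_filter]
  refine ⟨fun h e he => ?_, fun h i e he => h e he.1⟩
  obtain ⟨i, hi⟩ := hE e he
  exact h i e ⟨he, hi⟩

/-- For an m-uniform hypergraph `G` and a vector `x` with
`x i = exp(2πi·α_i/m)` (`α_i` integers), the signless Laplacian eigen-equation
`Q(G)x^{m-1} = 0`, which at vertex `i` reads
`deg(i)·x_i^{m-1} + ∑_{e ∋ i} ∏_{j ∈ e, j ≠ i} x_j = 0`, holds iff for every edge `e`,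
`∑_{j ∈ e} α_j ≡ m/2 (mod m)` (expressed integrally as `2·∑_{j∈e} α_j ≡ m (mod 2m)`);
in particular, if `G` has an edge, this is only possible when `m` is even. -/
theorem first_signless_laplacian_eigenvector_characterization
    (m n : ℕ) (hm : 0 < m) (E : Finset (Finset (Fin n))) (hU : ∀ e ∈ E, e.card = m)
    (α : Fin n → ℤ) (x : Fin n → ℂ)
    (hx : ∀ i, x i = Complex.exp (2 * Real.pi * Complex.I * (α i) / m)) :
    ((∀ i : Fin n, ((E.filter (fun e => i ∈ e)).card : ℂ) * x i ^ (m - 1) +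
        (∑ e ∈ E.filter (fun e => i ∈ e), ∏ j ∈ e.erase i, x j) = 0) ↔
      ∀ e ∈ E, Int.ModEq (2 * (m : ℤ)) (2 * ∑ j ∈ e, α j) (m : ℤ)) ∧
    (E.Nonempty →
      (∀ i : Fin n, ((E.filter (fun e => i ∈ e)).card : ℂ) * x i ^ (m - 1) +
        (∑ e ∈ E.filter (fun e => i ∈ e), ∏ j ∈ e.erase i, x j) = 0) →
      Even m) := by
  have hroot (i : Fin n) : x i ^ m = 1 := hx i ▸ exp_two_pi_mul_I_mul_int_div_pow hm.ne' (α i)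
  have hedge (e : Finset (Fin n)) :
      ∏ j ∈ e, x j = -1 ↔ 2 * ∑ j ∈ e, α j ≡ m [ZMOD 2 * m] := by
    simp only [hx, prod_exp_two_pi_mul_I_div, exp_two_pi_mul_I_mul_int_div_eq_neg_one_iff hm.ne']
  have hvertex : (∀ i : Fin n, ((E.filter (fun e => i ∈ e)).card : ℂ) * x i ^ (m - 1) +
      (∑ e ∈ E.filter (fun e => i ∈ e), ∏ j ∈ e.erase i, x j) = 0) ↔
      ∀ e ∈ E, ∏ j ∈ e, x j = -1 := by
    rw [← forall_sum_filter_mem_one_add_eq_zero_iff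
      (fun e he => card_pos.mp (hU e he ▸ hm))
      (fun e _ => by simp [norm_prod, norm_eq_one_of_pow_eq_one (hroot _) hm.ne'])]
    exact forall_congr' fun i =>
      add_sum_prod_erase_eq_zero_iff hm (hroot i) fun e he => (mem_filter.1 he).2
  refine ⟨hvertex.trans (forall₂_congr fun e _ => hedge e), fun ⟨e, he⟩ h => ?_⟩
  exact (Int.even_coe_nat m).mp (Int.even_of_two_mul_modEq ((hedge e).mp (hvertex.mp h e he)))
end

section
/- Let G be an m-uniform connected hypergraph with m odd. Then the only real vectors x with entries in {1,−1} (up to sign) satisfying L(G)x^{m-1} = 0 are the constant vectors, and no vector with entries in {1,−1} satisfies Q(G)x^{m-1} = 0. -/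
/-- A hypergraph on `Fin n` with edge set `E` is connected: every vertex lies in some
edge, and any two vertices are joined by a chain of edges. -/
def HyperConnected {n : ℕ} (E : Finset (Finset (Fin n))) : Prop :=
  (∀ v : Fin n, ∃ e ∈ E, v ∈ e) ∧
  ∀ u v : Fin n, Relation.ReflTransGen (fun a b => ∃ e ∈ E, a ∈ e ∧ b ∈ e) u v

lemma pm_prod {α : Type*} (s : Finset α) (x : α → ℝ)
    (hx : ∀ j, x j = 1 ∨ x j = -1) :
    (∏ j ∈ s, x j) = 1 ∨ (∏ j ∈ s, x j) = -1 := by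
  refine Finset.prod_induction x (fun y => y = 1 ∨ y = -1) ?_ (Or.inl rfl) (fun j _ => hx j)
  rintro a b (rfl | rfl) (rfl | rfl) <;> norm_num

lemma sum_eq_card_all_one {α : Type*} (s : Finset α) (f : α → ℝ)
    (hf : ∀ a ∈ s, f a = 1 ∨ f a = -1)
    (h : ∑ a ∈ s, f a = (s.card : ℝ)) : ∀ a ∈ s, f a = 1 := by
  have h0 : ∑ a ∈ s, (1 - f a) = 0 := by
    rw [Finset.sum_sub_distrib, h]; simp
  have := (Finset.sum_eq_zero_iff_of_nonneg (fun a ha => ?_)).mp h0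
  · intro a ha
    have := this a ha
    linarith
  · rcases hf a ha with h1 | h1 <;> rw [h1] <;> norm_num

lemma sum_eq_neg_card_all_neg_one {α : Type*} (s : Finset α) (f : α → ℝ)
    (hf : ∀ a ∈ s, f a = 1 ∨ f a = -1)
    (h : ∑ a ∈ s, f a = -(s.card : ℝ)) : ∀ a ∈ s, f a = -1 := by
  have h0 : ∑ a ∈ s, (1 + f a) = 0 := by
    rw [Finset.sum_add_distrib, h]; simp
  have := (Finset.sum_eq_zero_iff_of_nonneg (fun a ha => ?_)).mp h0
  · intro a ha
    have := this a ha
    linarith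
  · rcases hf a ha with h1 | h1 <;> rw [h1] <;> norm_num

/-- For a connected m-uniform hypergraph with `m` odd, the only vectors
with entries in `{1,-1}` satisfying the Laplacian equation `L(G)x^{m-1} = 0`
(at vertex `i`: `deg(i)·x_i^{m-1} = ∑_{e ∋ i} ∏_{j ∈ e, j ≠ i} x_j`) are the constant
vectors, and no vector with entries in `{1,-1}` satisfies the signless Laplacian
equation `Q(G)x^{m-1} = 0` (at vertex `i`:
`deg(i)·x_i^{m-1} + ∑_{e ∋ i} ∏_{j ∈ e, j ≠ i} x_j = 0`). -/
theorem odd_uniformity_H_eigenvectors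
    (m n : ℕ) (hm : Odd m) (hn : 0 < n)
    (E : Finset (Finset (Fin n))) (hU : ∀ e ∈ E, e.card = m)
    (hconn : HyperConnected E) :
    (∀ x : Fin n → ℝ, (∀ i, x i = 1 ∨ x i = -1) →
      (∀ i : Fin n, ((E.filter (fun e => i ∈ e)).card : ℝ) * x i ^ (m - 1) =
          ∑ e ∈ E.filter (fun e => i ∈ e), ∏ j ∈ e.erase i, x j) →
      ∀ i j, x i = x j) ∧
    (∀ x : Fin n → ℝ, (∀ i, x i = 1 ∨ x i = -1) →
      ¬ (∀ i : Fin n, ((E.filter (fun e => i ∈ e)).card : ℝ) * x i ^ (m - 1) +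
          (∑ e ∈ E.filter (fun e => i ∈ e), ∏ j ∈ e.erase i, x j) = 0)) := by
  have hev : Even (m - 1) := Nat.Odd.sub_odd hm odd_one
  have hpow : ∀ (x : Fin n → ℝ), (∀ i, x i = 1 ∨ x i = -1) → ∀ i, x i ^ (m - 1) = 1 := by
    intro x hx i
    rcases hx i with h | h <;> rw [h]
    · exact one_pow _
    · exact hev.neg_one_pow
  constructor
  · intro x hx heq
    -- each erase-product equals 1
    have key : ∀ i : Fin n, ∀ e ∈ E, i ∈ e → (∏ j ∈ e.erase i, x j) = 1 := by
      intro i e he hie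
      have hsum : ∑ e ∈ E.filter (fun e => i ∈ e), ∏ j ∈ e.erase i, x j =
          ((E.filter (fun e => i ∈ e)).card : ℝ) := by
        rw [← heq i, hpow x hx i, mul_one]
      exact sum_eq_card_all_one _ _ (fun e _ => pm_prod _ x hx) hsum e
        (Finset.mem_filter.mpr ⟨he, hie⟩)
    have step : ∀ a b : Fin n, (∃ e ∈ E, a ∈ e ∧ b ∈ e) → x a = x b := by
      rintro a b ⟨e, he, ha, hb⟩
      have h1 : x a * ∏ j ∈ e.erase a, x j = ∏ j ∈ e, x j := Finset.mul_prod_erase _ _ ha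
      have h2 : x b * ∏ j ∈ e.erase b, x j = ∏ j ∈ e, x j := Finset.mul_prod_erase _ _ hb
      rw [key a e he ha, mul_one] at h1
      rw [key b e he hb, mul_one] at h2
      rw [h1, h2]
    intro i j
    induction hconn.2 i j with
    | refl => rfl
    | tail h1 h2 ih => exact ih.trans (step _ _ h2)
  · intro x hx heq
    -- each erase-product equals -1
    have key : ∀ i : Fin n, ∀ e ∈ E, i ∈ e → (∏ j ∈ e.erase i, x j) = -1 := by
      intro i e he hie
      have hsum : ∑ e ∈ E.filter (fun e => i ∈ e), ∏ j ∈ e.erase i, x j =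
          -((E.filter (fun e => i ∈ e)).card : ℝ) := by
        have := heq i
        rw [hpow x hx i, mul_one] at this
        linarith
      exact sum_eq_neg_card_all_neg_one _ _ (fun e _ => pm_prod _ x hx) hsum e
        (Finset.mem_filter.mpr ⟨he, hie⟩)
    have step : ∀ a b : Fin n, (∃ e ∈ E, a ∈ e ∧ b ∈ e) → x a = x b := by
      rintro a b ⟨e, he, ha, hb⟩
      have h1 : x a * ∏ j ∈ e.erase a, x j = ∏ j ∈ e, x j := Finset.mul_prod_erase _ _ ha
      have h2 : x b * ∏ j ∈ e.erase b, x j = ∏ j ∈ e, x j := Finset.mul_prod_erase _ _ hb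
      rw [key a e he ha] at h1
      rw [key b e he hb] at h2
      have : x a * -1 = x b * -1 := h1.trans h2.symm
      linarith
    have hconst : ∀ i j : Fin n, x i = x j := by
      intro i j
      induction hconn.2 i j with
      | refl => rfl
      | tail h1 h2 ih => exact ih.trans (step _ _ h2)
    -- take a vertex and an edge containing it
    obtain ⟨e, he, hie⟩ := hconn.1 ⟨0, hn⟩
    set i : Fin n := ⟨0, hn⟩
    have hprod : (∏ j ∈ e.erase i, x j) = x i ^ (m - 1) := by
      rw [Finset.prod_congr rfl (fun j _ => (hconst j i : x j = x i)),
        Finset.prod_const, Finset.card_erase_of_mem hie, hU e he]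
    rw [key i e he hie, hpow x hx i] at hprod
    norm_num at hprod
end

section
/- Let m ≡ 2 (mod 4). If an m-uniform hypergraph G is odd-colorable, then G is odd-bipartite. Equivalently: if the equation B_G y = (m/2)·1 has a solution over Z_m with m ≡ 2 (mod 4), then B_G z = 1 has a solution over Z_2. -/
/-- Let `m ≡ 2 (mod 4)`. If an m-uniform hypergraph is odd-colorable,
i.e. `B_G y = (m/2)·1` has a solution over `ZMod m`, then it is odd-bipartite, i.e.
`B_G z = 1` has a solution over `ZMod 2`. -/
theorem odd_colorable_implies_odd_bipartite_of_two_mod_four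
    (m n : ℕ) (hm : m % 4 = 2) (E : Finset (Finset (Fin n))) (hU : ∀ e ∈ E, e.card = m)
    (hcol : ∃ y : Fin n → ZMod m,
      (Matrix.of fun (e : {e // e ∈ E}) (v : Fin n) =>
        if v ∈ e.1 then (1 : ZMod m) else 0).mulVec y = (fun _ => ((m / 2 : ℕ) : ZMod m))) :
    ∃ z : Fin n → ZMod 2,
      (Matrix.of fun (e : {e // e ∈ E}) (v : Fin n) =>
        if v ∈ e.1 then (1 : ZMod 2) else 0).mulVec z = (fun _ => 1) := by
  obtain ⟨y, hy⟩ := hcol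
  have h2 : (2 : ℕ) ∣ m := by omega
  have hodd : (m / 2) % 2 = 1 := by omega
  refine ⟨fun v => ZMod.castHom h2 (ZMod 2) (y v), ?_⟩
  funext e
  have hye := congrFun hy e
  simp only [Matrix.mulVec, Matrix.of_apply, dotProduct] at hye ⊢
  have : ∑ v, (if v ∈ e.1 then (1 : ZMod 2) else 0) * ZMod.castHom h2 (ZMod 2) (y v)
      = ZMod.castHom h2 (ZMod 2) (∑ v, (if v ∈ e.1 then (1 : ZMod m) else 0) * y v) := by
    rw [map_sum]
    refine Finset.sum_congr rfl fun v _ => ?_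
    by_cases hv : v ∈ e.1 <;> simp [hv]
  rw [this, hye, map_natCast]
  rw [← ZMod.natCast_mod, hodd]
  norm_num
end

section
/- Let G be the complete m-uniform hypergraph on n vertices with n ≥ m+1. Then the only solutions y ∈ Z_m^n to B_G y = 0 over Z_m are the constant vectors α·1 for α ∈ Z_m. -/
/-- For the complete m-uniform hypergraph on `n ≥ m+1` vertices (all
m-subsets are edges), the only solutions of `B_G y = 0` over `ZMod m` are the constant
vectors. -/
theorem complete_hypergraph_kernel_constant
    (m n : ℕ) (hm : 0 < m) (hn : m + 1 ≤ n) :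
    {y : Fin n → ZMod m |
      (Matrix.of
        (fun (e : {e // e ∈ Finset.powersetCard m (Finset.univ : Finset (Fin n))})
          (v : Fin n) => if v ∈ e.1 then (1 : ZMod m) else 0)).mulVec y = 0} =
    {y : Fin n → ZMod m | ∃ α : ZMod m, y = fun _ => α} := by
  ext y
  simp only [Set.mem_setOf_eq]
  constructor
  · intro h
    have key : ∀ e ∈ Finset.powersetCard m (Finset.univ : Finset (Fin n)),
        ∑ v ∈ e, y v = 0 := by
      intro e he
      have := congrFun h ⟨e, he⟩
      simpa [Matrix.mulVec, dotProduct, ite_mul, Finset.sum_ite_mem] using this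
    have hconst : ∀ i j : Fin n, y i = y j := by
      intro i j
      rcases eq_or_ne i j with rfl | hij
      · rfl
      obtain ⟨U, hU, hcard⟩ := Finset.exists_subset_card_eq
        (show m - 1 ≤ (Finset.univ \ {i, j} : Finset (Fin n)).card by
          rw [Finset.card_sdiff_of_subset (Finset.subset_univ _), Finset.card_univ, Fintype.card_fin,
            Finset.card_insert_of_notMem (by simpa using hij), Finset.card_singleton]
          omega)
      have hiU : i ∉ U := fun hi => by
        simpa using (hU hi)
      have hjU : j ∉ U := fun hj => by
        simpa using (hU hj)
      have h1 : ∑ v ∈ insert i U, y v = 0 := key _ (by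
        simp only [Finset.mem_powersetCard]
        refine ⟨Finset.subset_univ _, ?_⟩
        rw [Finset.card_insert_of_notMem hiU, hcard]; omega)
      have h2 : ∑ v ∈ insert j U, y v = 0 := key _ (by
        simp only [Finset.mem_powersetCard]
        refine ⟨Finset.subset_univ _, ?_⟩
        rw [Finset.card_insert_of_notMem hjU, hcard]; omega)
      rw [Finset.sum_insert hiU] at h1
      rw [Finset.sum_insert hjU] at h2
      have := h1.trans h2.symm
      exact add_right_cancel this
    exact ⟨y ⟨0, by omega⟩, funext fun i => hconst i _⟩
  · rintro ⟨α, rfl⟩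
    funext e
    have : ∑ v : Fin n, (if v ∈ e.1 then (1 : ZMod m) else 0) * α = 0 := by
      have hc : e.1.card = m := (Finset.mem_powersetCard.mp e.2).2
      simp only [ite_mul, one_mul, zero_mul, Finset.sum_ite_mem, Finset.univ_inter,
        Finset.sum_const, hc, nsmul_eq_mul, ZMod.natCast_self, zero_mul]
    simpa [Matrix.mulVec, dotProduct] using this
end

section
/- Let G be the complete m-uniform hypergraph on n vertices with n ≥ m+1 and m even. Then the equation B_G y = (m/2)·1 has no solution over Z_m; consequently G is not odd-colorable. -/
/-!
Comparing the two edges `S ∪ {i}` and `S ∪ {j}` shows that any solution `y` takes the same value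
`a` at every vertex, so every edge sum equals `m • a = 0` in `ZMod m`, whereas `m / 2 ≠ 0` there.
-/

open Finset

theorem Finset.apply_eq_of_sum_powersetCard_eq {α M : Type*} [DecidableEq α] [AddCommMonoid M]
    [IsRightCancelAdd M] {s : Finset α} {k : ℕ} (hk : k ≠ 0) (hks : k + 1 ≤ #s) {f : α → M}
    {c : M} (hf : ∀ e ∈ s.powersetCard k, ∑ v ∈ e, f v = c) {i j : α} (hi : i ∈ s)
    (hj : j ∈ s) : f i = f j := by
  rcases eq_or_ne i j with rfl | hij
  · rfl
  have hcard : #((s.erase i).erase j) = #s - 2 := by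
    rw [card_erase_of_mem (mem_erase.2 ⟨hij.symm, hj⟩), card_erase_of_mem hi]; omega
  obtain ⟨S, hS⟩ := powersetCard_nonempty.2 (hcard ▸ (by omega : k - 1 ≤ #s - 2))
  obtain ⟨hSs, hSk⟩ := mem_powersetCard.1 hS
  have hiS : i ∉ S := fun h => by simpa using hSs h
  have hjS : j ∉ S := fun h => by simpa using hSs h
  have hedge : ∀ x ∈ s, x ∉ S → insert x S ∈ s.powersetCard k := fun x hx hxS =>
    mem_powersetCard.2 ⟨insert_subset hx (hSs.trans ((erase_subset _ _).trans (erase_subset _ _))),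
      by rw [card_insert_of_notMem hxS, hSk]; omega⟩
  have h := (hf _ (hedge i hi hiS)).trans (hf _ (hedge j hj hjS)).symm
  rw [sum_insert hiS, sum_insert hjS] at h
  exact add_right_cancel h

theorem Matrix.of_ite_mem_mulVec_apply {ι α R : Type*} [Fintype α] [DecidableEq α]
    [NonAssocSemiring R] (s : ι → Finset α) (y : α → R) (e : ι) :
    (Matrix.of fun e v => if v ∈ s e then (1 : R) else 0).mulVec y e = ∑ v ∈ s e, y v := by
  simp only [Matrix.mulVec, dotProduct, Matrix.of_apply, ite_mul, one_mul, zero_mul,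
    sum_ite_mem, univ_inter]

theorem ZMod.natCast_half_ne_zero {m : ℕ} (hm : 0 < m) (hme : Even m) :
    ((m / 2 : ℕ) : ZMod m) ≠ 0 := by
  rw [Ne, ZMod.natCast_eq_zero_iff]
  obtain ⟨r, rfl⟩ := hme
  exact Nat.not_dvd_of_pos_of_lt (by omega) (by omega)

/-- For the complete m-uniform hypergraph on `n ≥ m+1` vertices with `m`
even, the equation `B_G y = (m/2)·1` has no solution over `ZMod m`; consequently the
hypergraph is not odd-colorable. -/
theorem complete_hypergraph_not_odd_colorable
    (m n : ℕ) (hm : 0 < m) (hme : Even m) (hn : m + 1 ≤ n) :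
    (¬ ∃ y : Fin n → ZMod m,
      (Matrix.of
        (fun (e : {e // e ∈ Finset.powersetCard m (Finset.univ : Finset (Fin n))})
          (v : Fin n) => if v ∈ e.1 then (1 : ZMod m) else 0)).mulVec y
        = (fun _ => ((m / 2 : ℕ) : ZMod m))) ∧
    (¬ ∃ f : Fin n → ZMod m, ∀ e ∈ Finset.powersetCard m (Finset.univ : Finset (Fin n)),
      ∑ v ∈ e, f v = ((m / 2 : ℕ) : ZMod m)) := by
  have hsum : ¬ ∃ f : Fin n → ZMod m, ∀ e ∈ powersetCard m (univ : Finset (Fin n)),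
      ∑ v ∈ e, f v = ((m / 2 : ℕ) : ZMod m) := by
    rintro ⟨f, hf⟩
    have hcard : m + 1 ≤ #(univ : Finset (Fin n)) := by simpa using hn
    let v₀ : Fin n := ⟨0, by omega⟩
    obtain ⟨e, he⟩ := powersetCard_nonempty.2 (by omega : m ≤ #(univ : Finset (Fin n)))
    have hconst : ∀ v, f v = f v₀ := fun v =>
      apply_eq_of_sum_powersetCard_eq hm.ne' hcard hf (mem_univ v) (mem_univ v₀)
    have hzero : ∑ v ∈ e, f v = 0 := by
      rw [sum_congr rfl fun v _ => hconst v, sum_const, (mem_powersetCard.1 he).2, nsmul_eq_mul,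
        ZMod.natCast_self, zero_mul]
    exact ZMod.natCast_half_ne_zero hm hme ((hf e he).symm.trans hzero)
  refine ⟨fun ⟨y, hy⟩ => hsum ⟨y, fun e he => ?_⟩, hsum⟩
  simpa only [Matrix.of_ite_mem_mulVec_apply] using congrFun hy ⟨e, he⟩
end
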